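/- One has ⋂_{Λ>0} H_Λ = {0}, and the union ⋃_{Λ>0} H_Λ is dense in K. -/

import Mathlib

open MeasureTheory Complex Set Real

noncomputable section

/-- The measure `dt` on `(0,∞)`. -/
def mu : Measure ℝ := volume.restrict (Ioi 0)

/-- `K = L²((0,∞), dt)`. -/
abbrev Kspace := Lp ℂ 2 mu

/-- `Fp` is the Fourier cosine transform `F₊`: a unitary involution of `K` given, in the
`L²` sense, by `F₊(f)(t) = 2∫₀^∞ cos(2πtu) f(u) du`. -/
def IsCosineTransform (Fp : Kspace ≃ₗᵢ[ℂ] Kspace) : Prop :=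
  (∀ f : Kspace, Fp (Fp f) = f) ∧
  ∀ f : Kspace, Integrable (⇑f) mu →
    ∀ᵐ t ∂mu, (Fp f : ℝ → ℂ) t = 2 * ∫ u, (Real.cos (2 * π * t * u) : ℂ) * f u ∂mu

/-- `f ∈ K_{a,b}`: `f` vanishes a.e. on `(0,a)` and `F₊(f)` vanishes a.e. on `(0,b)`. -/
def MemKab (Fp : Kspace ≃ₗᵢ[ℂ] Kspace) (a b : ℝ) (f : Kspace) : Prop :=
  (∀ᵐ t ∂mu, t < a → (f : ℝ → ℂ) t = 0) ∧
  (∀ᵐ t ∂mu, t < b → (Fp f : ℝ → ℂ) t = 0)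

/-- `Iop` is the unitary involution `I(f)(t) = (1/t) f(1/t)` of `K`. -/
def IsIOperator (Iop : Kspace ≃ₗᵢ[ℂ] Kspace) : Prop :=
  (∀ f : Kspace, Iop (Iop f) = f) ∧
  ∀ f : Kspace, ∀ᵐ t ∂mu, (Iop f : ℝ → ℂ) t = (t : ℂ)⁻¹ * (f : ℝ → ℂ) t⁻¹

/-- `f ∈ H_Λ`: `f` vanishes a.e. on `(Λ,∞)` and `G(f) = I(F₊(I(f)))` vanishes a.e. on
`(Λ,∞)`. -/
def MemH (Fp Iop : Kspace ≃ₗᵢ[ℂ] Kspace) (Λ : ℝ) (f : Kspace) : Prop :=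
  (∀ᵐ t ∂mu, Λ < t → (f : ℝ → ℂ) t = 0) ∧
  (∀ᵐ t ∂mu, Λ < t → (Iop (Fp (Iop f)) : ℝ → ℂ) t = 0)

/-!
The intersection is trivial because an element of every `H_Λ` vanishes on every `(Λ, ∞)`.

For density, `H_Λ` contains the orthogonal complement of `D_Λ + G D_Λ`, where `D_Λ` is the space
of functions vanishing on `(0, Λ)`; so a `g` orthogonal to every `H_Λ` lies in the closure of
every `D_Λ + G D_Λ`. These two subspaces are almost orthogonal for large `Λ`: `I` maps `D_Λ` to
functions supported in `(0, 1/Λ]`, whose cosine transforms are bounded by `2 Λ^{-1/2}` times their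
norm, whence `|⟪u, G w⟫| ≤ (2/Λ) ‖u‖ ‖w‖`. Hence an approximation `g ≈ u + G w` has
`‖u‖, ‖w‖ = O(‖g‖)`, while `⟪g, u⟫` and `⟪g, G w⟫ = ⟪G g, w⟫` are controlled by the norms of the
tails of `g` and `G g` beyond `Λ`, which tend to `0`. Thus `g = 0`.
-/

open Filter Topology
open scoped ENNReal

section InnerProductSpace

variable {𝕜 E : Type*} [RCLike 𝕜] [NormedAddCommGroup E] [InnerProductSpace 𝕜 E]

theorem LinearIsometryEquiv.inner_map_left_of_involutive (T : E ≃ₗᵢ[𝕜] E)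
    (hT : ∀ x, T (T x) = x) (x y : E) : inner 𝕜 (T x) y = inner 𝕜 x (T y) := by
  conv_lhs => rw [← hT y]
  exact T.inner_map_map x (T y)

theorem norm_sq_le_of_almost_orthogonal {g u v : E} {ε : ℝ}
    (huv : ‖inner 𝕜 u v‖ ≤ ‖u‖ * ‖v‖ / 2) (hg : ‖g - (u + v)‖ ≤ ε)
    (hu : ‖inner 𝕜 g u‖ ≤ ε * ‖u‖) (hv : ‖inner 𝕜 g v‖ ≤ ε * ‖v‖) :
    ‖g‖ ^ 2 ≤ ε * (3 * ‖g‖ + 2 * ε) := by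
  have huv_norm : ‖u + v‖ ≤ ‖g‖ + ε := by
    calc ‖u + v‖ = ‖g - (g - (u + v))‖ := by rw [sub_sub_cancel]
      _ ≤ ‖g‖ + ε := (norm_sub_le _ _).trans (by gcongr)
  -- near-orthogonality makes `‖u + v‖` control `‖u‖ + ‖v‖`
  have hsum : ‖u‖ + ‖v‖ ≤ 2 * (‖g‖ + ε) := by
    have hre := (abs_le.1 ((RCLike.abs_re_le_norm (inner 𝕜 u v)).trans huv)).1
    have hexp := norm_add_sq (𝕜 := 𝕜) u v
    nlinarith [norm_nonneg (u + v), norm_nonneg u, norm_nonneg v, sq_nonneg (‖u‖ - ‖v‖)]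
  have hsplit : ‖g‖ ^ 2 ≤ ‖inner 𝕜 g u‖ + ‖inner 𝕜 g v‖ + ‖inner 𝕜 g (g - (u + v))‖ := by
    calc ‖g‖ ^ 2 = RCLike.re (inner 𝕜 g u + inner 𝕜 g v + inner 𝕜 g (g - (u + v))) := by
          rw [← inner_add_right, ← inner_add_right, add_sub_cancel, inner_self_eq_norm_sq]
      _ ≤ _ := (RCLike.re_le_norm _).trans (norm_add₃_le ..)
  have hrest : ‖inner 𝕜 g (g - (u + v))‖ ≤ ‖g‖ * ε :=
    (norm_inner_le_norm _ _).trans (by gcongr)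
  have hε : 0 ≤ ε := (norm_nonneg _).trans hg
  nlinarith [mul_le_mul_of_nonneg_left hsum hε]

theorem eq_zero_of_eventually_mem_closure_sup {ι : Type*} {l : Filter ι} [l.NeBot] {g : E}
    {U V : ι → Submodule 𝕜 E} (hg : ∀ᶠ i in l, g ∈ closure ((U i ⊔ V i : Submodule 𝕜 E) : Set E))
    (hUV : ∀ᶠ i in l, ∀ u ∈ U i, ∀ v ∈ V i, ‖inner 𝕜 u v‖ ≤ ‖u‖ * ‖v‖ / 2)
    (hU : ∀ ε > 0, ∀ᶠ i in l, ∀ u ∈ U i, ‖inner 𝕜 g u‖ ≤ ε * ‖u‖)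
    (hV : ∀ ε > 0, ∀ᶠ i in l, ∀ v ∈ V i, ‖inner 𝕜 g v‖ ≤ ε * ‖v‖) : g = 0 := by
  have key : ∀ ε > 0, ‖g‖ ^ 2 ≤ ε * (3 * ‖g‖ + 2 * ε) := by
    intro ε hε
    obtain ⟨i, hgi, hUVi, hUi, hVi⟩ := (hg.and (hUV.and ((hU ε hε).and (hV ε hε)))).exists
    obtain ⟨x, hx, hgx⟩ := Metric.mem_closure_iff.1 hgi ε hε
    obtain ⟨u, hu, v, hv, rfl⟩ := Submodule.mem_sup.1 hx
    exact norm_sq_le_of_almost_orthogonal (hUVi u hu v hv)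
      (by rw [← dist_eq_norm]; exact hgx.le) (hUi u hu) (hVi v hv)
  by_contra hne
  have hpos : 0 < ‖g‖ := norm_pos_iff.2 hne
  nlinarith [key (‖g‖ / 10) (by positivity)]

end InnerProductSpace

section Lp

variable {α 𝕜 E : Type*} [MeasurableSpace α] {μ : Measure α} [RCLike 𝕜] [NormedAddCommGroup E]
  [InnerProductSpace 𝕜 E]

namespace MeasureTheory.Lp

def vanishingOn (p : ℝ≥0∞) (μ : Measure α) (s : Set α) : Submodule 𝕜 (Lp E p μ) where
  carrier := {f | ∀ᵐ x ∂μ, x ∈ s → f x = 0}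
  zero_mem' := by
    filter_upwards [coeFn_zero E p μ] with x hx _ using hx
  add_mem' {f g} hf hg := by
    rw [Set.mem_ofPred_eq] at hf hg ⊢
    filter_upwards [coeFn_add f g, hf, hg] with x hx hfx hgx hxs
    rw [hx, Pi.add_apply, hfx hxs, hgx hxs, add_zero]
  smul_mem' c f hf := by
    rw [Set.mem_ofPred_eq] at hf ⊢
    filter_upwards [coeFn_smul c f, hf] with x hx hfx hxs
    rw [hx, Pi.smul_apply, hfx hxs, smul_zero]

variable {p : ℝ≥0∞} {s t : Set α}

theorem mem_vanishingOn {f : Lp E p μ} :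
    f ∈ vanishingOn (𝕜 := 𝕜) p μ s ↔ ∀ᵐ x ∂μ, x ∈ s → f x = 0 :=
  Iff.rfl

theorem vanishingOn_anti (hst : s ⊆ t) :
    vanishingOn (𝕜 := 𝕜) (E := E) p μ t ≤ vanishingOn p μ s :=
  fun _ hf => (mem_vanishingOn.1 hf).mono fun _ h hx => h (hst hx)

def indicatorLp (hs : MeasurableSet s) (f : Lp E 2 μ) : Lp E 2 μ :=
  ((Lp.memLp f).indicator hs).toLp _

theorem coeFn_indicatorLp (hs : MeasurableSet s) (f : Lp E 2 μ) :
    indicatorLp hs f =ᵐ[μ] s.indicator f :=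
  MemLp.coeFn_toLp _

theorem indicatorLp_mem_vanishingOn_compl (hs : MeasurableSet s) (f : Lp E 2 μ) :
    indicatorLp hs f ∈ vanishingOn (𝕜 := 𝕜) 2 μ sᶜ := by
  filter_upwards [coeFn_indicatorLp hs f] with x hx hxs
  rw [hx, indicator_of_notMem hxs]

theorem inner_indicatorLp_left (hs : MeasurableSet s) (f : Lp E 2 μ) {u : Lp E 2 μ}
    (hu : u ∈ vanishingOn (𝕜 := 𝕜) 2 μ sᶜ) :
    inner 𝕜 (indicatorLp hs f) u = inner 𝕜 f u := by
  refine integral_congr_ae ?_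
  filter_upwards [coeFn_indicatorLp hs f, hu] with x hfx hux
  by_cases hxs : x ∈ s
  · rw [hfx, indicator_of_mem hxs]
  · rw [hux hxs, inner_zero_right, inner_zero_right]

theorem inner_indicatorLp_right (hs : MeasurableSet s) (f : Lp E 2 μ) {u : Lp E 2 μ}
    (hu : u ∈ vanishingOn (𝕜 := 𝕜) 2 μ sᶜ) :
    inner 𝕜 u (indicatorLp hs f) = inner 𝕜 u f := by
  rw [← inner_conj_symm, inner_indicatorLp_left hs f hu, inner_conj_symm]

theorem mem_vanishingOn_of_mem_orthogonal (hs : MeasurableSet s) (hst : Disjoint s t)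
    {f : Lp E 2 μ} (hf : f ∈ (vanishingOn (𝕜 := 𝕜) 2 μ t)ᗮ) : f ∈ vanishingOn (𝕜 := 𝕜) 2 μ s := by
  have hP : indicatorLp hs f ∈ vanishingOn (𝕜 := 𝕜) 2 μ sᶜ :=
    indicatorLp_mem_vanishingOn_compl hs f
  have hP0 : indicatorLp hs f = 0 := by
    rw [← inner_self_eq_zero (𝕜 := 𝕜), inner_indicatorLp_right hs f hP]
    exact (Submodule.mem_orthogonal _ f).1 hf _
      (vanishingOn_anti (subset_compl_iff_disjoint_right.2 hst.symm) hP)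
  filter_upwards [coeFn_indicatorLp hs f, coeFn_zero E 2 μ] with x hPx h0x hxs
  rw [← indicator_of_mem hxs f, ← hPx, hP0, h0x, Pi.zero_apply]

theorem norm_sq_eq_integral_norm_sq (f : Lp E 2 μ) : ‖f‖ ^ 2 = ∫ x, ‖f x‖ ^ 2 ∂μ := by
  rw [norm_def, (Lp.memLp f).eLpNorm_eq_integral_rpow_norm two_ne_zero ENNReal.ofNat_ne_top,
    ENNReal.toReal_ofReal (by positivity)]
  simp only [ENNReal.toReal_ofNat, Real.rpow_two]
  simpa using Real.rpow_inv_natCast_pow (n := 2) (integral_nonneg fun x => sq_nonneg ‖f x‖)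
    two_ne_zero

theorem norm_indicatorLp_sq (hs : MeasurableSet s) (f : Lp E 2 μ) :
    ‖indicatorLp hs f‖ ^ 2 = ∫ x in s, ‖f x‖ ^ 2 ∂μ := by
  rw [norm_sq_eq_integral_norm_sq, ← integral_indicator hs]
  refine integral_congr_ae ?_
  filter_upwards [coeFn_indicatorLp hs f] with x hx
  by_cases hxs : x ∈ s <;> simp [hx, hxs]

theorem tendsto_norm_indicatorLp_Ici {μ : Measure ℝ} (f : Lp E 2 μ) :
    Tendsto (fun Λ : ℝ => ‖indicatorLp (measurableSet_Ici (a := Λ)) f‖) atTop (𝓝 0) := by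
  have hint : Integrable (fun x => ‖f x‖ ^ 2) μ :=
    (memLp_two_iff_integrable_sq_norm (Lp.aestronglyMeasurable f)).1 (Lp.memLp f)
  have hempty : ⋂ Λ : ℝ, Ici Λ = ∅ :=
    eq_empty_of_forall_notMem fun x hx => (mem_iInter.1 hx (x + 1)).not_gt (lt_add_one x)
  have hsq := tendsto_setIntegral_of_antitone (fun Λ : ℝ => measurableSet_Ici)
    (fun _ _ h => Ici_subset_Ici.2 h) ⟨0, hint.integrableOn⟩
  rw [hempty, Measure.restrict_empty, integral_zero_measure] at hsq
  have hsqrt := (Real.continuous_sqrt.tendsto 0).comp hsq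
  rw [Real.sqrt_zero] at hsqrt
  refine hsqrt.congr fun Λ => ?_
  rw [Function.comp_apply, ← norm_indicatorLp_sq, Real.sqrt_sq (norm_nonneg _)]

theorem eventually_norm_inner_le {μ : Measure ℝ} (f : Lp E 2 μ) {ε : ℝ} (hε : 0 < ε) :
    ∀ᶠ Λ in atTop, ∀ u ∈ vanishingOn (𝕜 := 𝕜) 2 μ (Iio Λ), ‖inner 𝕜 f u‖ ≤ ε * ‖u‖ := by
  filter_upwards [(tendsto_norm_indicatorLp_Ici f).eventually_lt_const hε] with Λ hΛ u hu
  rw [← inner_indicatorLp_left measurableSet_Ici f (by rwa [compl_Ici])]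
  exact (norm_inner_le_norm _ _).trans (by gcongr)

theorem integrable_of_ae_eq_zero_off (hμs : μ s ≠ ∞) {f : Lp E 2 μ}
    (hf : ∀ᵐ x ∂μ, x ∉ s → f x = 0) : Integrable f μ :=
  have : IsFiniteMeasure (μ.restrict s) := isFiniteMeasure_restrict.2 hμs
  IntegrableOn.integrable_of_ae_notMem_eq_zero (((Lp.memLp f).restrict s).integrable one_le_two) hf

theorem integral_norm_le_sqrt_measure_mul_norm (hμs : μ s ≠ ∞) {f : Lp E 2 μ}
    (hf : ∀ᵐ x ∂μ, x ∉ s → f x = 0) :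
    ∫ x, ‖f x‖ ∂μ ≤ √(μ s).toReal * ‖f‖ := by
  have hf1 : eLpNorm f 1 (μ.restrict s) ≤ eLpNorm f 2 μ * μ s ^ (1 / 2 : ℝ) := by
    refine (eLpNorm_le_eLpNorm_mul_rpow_measure_univ one_le_two
      (Lp.aestronglyMeasurable f).restrict).trans ?_
    have hexp : 1 / (1 : ℝ≥0∞).toReal - 1 / (2 : ℝ≥0∞).toReal = 1 / 2 := by norm_num
    rw [Measure.restrict_apply_univ, hexp]
    gcongr
    exact Measure.restrict_le_self
  calc ∫ x, ‖f x‖ ∂μ = (eLpNorm f 1 (μ.restrict s)).toReal := by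
        rw [← setIntegral_eq_integral_of_ae_compl_eq_zero (hf.mono fun x h hx => by simp [h hx]),
          integral_norm_eq_lintegral_enorm (Lp.aestronglyMeasurable f).restrict,
          eLpNorm_one_eq_lintegral_enorm]
    _ ≤ (eLpNorm f 2 μ * μ s ^ (1 / 2 : ℝ)).toReal :=
        ENNReal.toReal_mono (ENNReal.mul_ne_top (Lp.eLpNorm_ne_top f) (by finiteness)) hf1
    _ = √(μ s).toReal * ‖f‖ := by
        rw [ENNReal.toReal_mul, ← ENNReal.toReal_rpow, ← Real.sqrt_eq_rpow, norm_def, mul_comm]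

theorem norm_inner_le_mul_integral_norm {a h : Lp E 2 μ} (ha : Integrable a μ) {C : ℝ}
    (hh : ∀ᵐ x ∂μ, ‖h x‖ ≤ C) : ‖inner 𝕜 a h‖ ≤ C * ∫ x, ‖a x‖ ∂μ := by
  rw [L2.inner_def, ← integral_const_mul]
  refine norm_integral_le_of_norm_le (ha.norm.const_mul C) ?_
  filter_upwards [hh] with x hx
  rw [mul_comm C]
  exact (norm_inner_le_norm _ _).trans (by gcongr)

end MeasureTheory.Lp

end Lp

theorem ae_mu_pos : ∀ᵐ t ∂mu, 0 < t :=
  ae_restrict_mem measurableSet_Ioi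

theorem mu_Iic (b : ℝ) : mu (Iic b) = ENNReal.ofReal b := by
  rw [mu, Measure.restrict_apply measurableSet_Iic, Iic_inter_Ioi, Real.volume_Ioc, sub_zero]

-- `t ↦ t⁻¹` is differentiable on `(0, ∞)`, hence maps null sets to null sets.
theorem ae_mu_comp_inv {P : ℝ → Prop} (h : ∀ᵐ t ∂mu, P t) : ∀ᵐ t ∂mu, P t⁻¹ := by
  rw [mu, ae_restrict_iff' measurableSet_Ioi, ae_iff] at h ⊢
  have hdiff : DifferentiableOn ℝ (fun t : ℝ => t⁻¹) {t | ¬(t ∈ Ioi 0 → P t)} := fun t ht =>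
    (differentiableAt_inv (ne_of_gt (Classical.not_imp.1 ht).1)).differentiableWithinAt
  refine measure_mono_null (fun t ht => ?_)
    (addHaar_image_eq_zero_of_differentiableOn_of_addHaar_eq_zero volume hdiff h)
  rw [mem_ofPred_eq, Classical.not_imp] at ht
  exact ⟨t⁻¹, Classical.not_imp.2 ⟨inv_pos.2 (mem_Ioi.1 ht.1), ht.2⟩, inv_inv t⟩

theorem eq_zero_of_forall_ae_eq_zero_Ioi {E : Type*} [NormedAddCommGroup E] {p : ℝ≥0∞}
    {f : Lp E p mu} (hf : ∀ Λ > 0, ∀ᵐ t ∂mu, Λ < t → f t = 0) : f = 0 := by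
  rw [Lp.eq_zero_iff_ae_eq_zero]
  have h := ae_all_iff.2 fun n : ℕ => hf (1 / (n + 1)) Nat.one_div_pos_of_nat
  filter_upwards [h, ae_mu_pos] with t ht htpos
  obtain ⟨n, hn⟩ := exists_nat_one_div_lt htpos
  exact ht n hn

section Kspace

variable {Fp Iop : Kspace ≃ₗᵢ[ℂ] Kspace}

def gOp (Fp Iop : Kspace ≃ₗᵢ[ℂ] Kspace) : Kspace ≃ₗᵢ[ℂ] Kspace :=
  (Iop.trans Fp).trans Iop

abbrev dSpace (Λ : ℝ) : Submodule ℂ Kspace :=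
  Lp.vanishingOn 2 mu (Iio Λ)

theorem gOp_gOp (hFp : IsCosineTransform Fp) (hIop : IsIOperator Iop) (f : Kspace) :
    gOp Fp Iop (gOp Fp Iop f) = f := by
  simp only [gOp, LinearIsometryEquiv.trans_apply, hIop.1, hFp.1]

theorem ae_Iop_eq_zero_of_mem_dSpace (hIop : IsIOperator Iop) {Λ : ℝ} (hΛ : 0 < Λ)
    {u : Kspace} (hu : u ∈ dSpace Λ) :
    ∀ᵐ t ∂mu, t ∉ Iic Λ⁻¹ → Iop u t = 0 := by
  filter_upwards [hIop.2 u, ae_mu_comp_inv hu, ae_mu_pos] with t hIt hut ht htΛ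
  rw [hIt, hut ((inv_lt_comm₀ ht hΛ).2 (not_le.1 htΛ)), mul_zero]

theorem ae_norm_le_of_isCosineTransform (hFp : IsCosineTransform Fp) {v : Kspace}
    (hv : Integrable v mu) : ∀ᵐ t ∂mu, ‖Fp v t‖ ≤ 2 * ∫ u, ‖v u‖ ∂mu := by
  filter_upwards [hFp.2 v hv] with t ht
  rw [ht, norm_mul, Complex.norm_two]
  gcongr
  refine norm_integral_le_of_norm_le hv.norm (Eventually.of_forall fun u => ?_)
  rw [norm_mul, Complex.norm_real, Real.norm_eq_abs]
  exact mul_le_of_le_one_left (norm_nonneg _) (Real.abs_cos_le_one _)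

theorem norm_inner_gOp_le (hFp : IsCosineTransform Fp) (hIop : IsIOperator Iop) {Λ : ℝ}
    (hΛ : 0 < Λ) {u w : Kspace} (hu : u ∈ dSpace Λ) (hw : w ∈ dSpace Λ) :
    ‖inner ℂ u (gOp Fp Iop w)‖ ≤ 2 * Λ⁻¹ * (‖u‖ * ‖w‖) := by
  have hfin : mu (Iic Λ⁻¹) ≠ ∞ := by rw [mu_Iic]; exact ENNReal.ofReal_ne_top
  have hmeas : (mu (Iic Λ⁻¹)).toReal = Λ⁻¹ := by
    rw [mu_Iic, ENNReal.toReal_ofReal (by positivity)]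
  have hL1 : ∀ v ∈ dSpace Λ, Integrable (Iop v) mu ∧ ∫ t, ‖Iop v t‖ ∂mu ≤ √Λ⁻¹ * ‖v‖ := fun v hv =>
    have hIv := ae_Iop_eq_zero_of_mem_dSpace hIop hΛ hv
    ⟨Lp.integrable_of_ae_eq_zero_off hfin hIv, by
      simpa [hmeas] using Lp.integral_norm_le_sqrt_measure_mul_norm hfin hIv⟩
  obtain ⟨hIu, hIu_le⟩ := hL1 u hu
  obtain ⟨hIw, hIw_le⟩ := hL1 w hw
  calc ‖inner ℂ u (gOp Fp Iop w)‖ = ‖inner ℂ (Iop u) (Fp (Iop w))‖ := by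
        rw [Iop.inner_map_left_of_involutive hIop.1]; rfl
    _ ≤ (2 * ∫ t, ‖Iop w t‖ ∂mu) * ∫ t, ‖Iop u t‖ ∂mu :=
        Lp.norm_inner_le_mul_integral_norm hIu (ae_norm_le_of_isCosineTransform hFp hIw)
    _ ≤ (2 * (√Λ⁻¹ * ‖w‖)) * (√Λ⁻¹ * ‖u‖) := by gcongr
    _ = 2 * (√Λ⁻¹ * √Λ⁻¹) * (‖u‖ * ‖w‖) := by ring
    _ = 2 * Λ⁻¹ * (‖u‖ * ‖w‖) := by rw [Real.mul_self_sqrt (inv_nonneg.2 hΛ.le)]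

/-- `H_Λ` is the orthogonal complement of `D_Λ + G D_Λ`. -/
def hSpace (Fp Iop : Kspace ≃ₗᵢ[ℂ] Kspace) (Λ : ℝ) : Submodule ℂ Kspace :=
  (dSpace Λ ⊔ (dSpace Λ).map (gOp Fp Iop).toLinearEquiv.toLinearMap)ᗮ

theorem memH_of_mem_hSpace (hFp : IsCosineTransform Fp) (hIop : IsIOperator Iop) {Λ : ℝ}
    {f : Kspace} (hf : f ∈ hSpace Fp Iop Λ) : MemH Fp Iop Λ f := by
  rw [hSpace, ← Submodule.inf_orthogonal, Submodule.mem_inf] at hf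
  obtain ⟨hfD, hfGD⟩ := hf
  have hGf : gOp Fp Iop f ∈ (dSpace Λ)ᗮ := fun u hu => by
    rw [← (gOp Fp Iop).inner_map_left_of_involutive (gOp_gOp hFp hIop)]
    exact hfGD _ (Submodule.mem_map_of_mem hu)
  exact ⟨Lp.mem_vanishingOn_of_mem_orthogonal measurableSet_Ioi Ioi_disjoint_Iio_same hfD,
    Lp.mem_vanishingOn_of_mem_orthogonal measurableSet_Ioi Ioi_disjoint_Iio_same hGf⟩

theorem hSpace_mono : Monotone (hSpace Fp Iop) := fun _ _ h =>
  Submodule.orthogonal_le <| sup_le_sup (Lp.vanishingOn_anti (Iio_subset_Iio h))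
    (Submodule.map_mono (Lp.vanishingOn_anti (Iio_subset_Iio h)))

theorem dense_iSup_hSpace (hFp : IsCosineTransform Fp) (hIop : IsIOperator Iop) :
    Dense ((⨆ Λ : Ioi (0 : ℝ), hSpace Fp Iop Λ : Submodule ℂ Kspace) : Set Kspace) := by
  rw [Submodule.dense_iff_topologicalClosure_eq_top, Submodule.topologicalClosure_eq_top_iff,
    Submodule.eq_bot_iff]
  intro g hg
  rw [← Submodule.iInf_orthogonal, Submodule.mem_iInf] at hg
  have hcl : ∀ Λ > 0, g ∈ closure
      ((dSpace Λ ⊔ (dSpace Λ).map (gOp Fp Iop).toLinearEquiv.toLinearMap : Submodule ℂ Kspace) :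
        Set Kspace) := fun Λ hΛ => by
    rw [← Submodule.topologicalClosure_coe, SetLike.mem_coe,
      ← Submodule.orthogonal_orthogonal_eq_closure]
    exact hg ⟨Λ, hΛ⟩
  refine eq_zero_of_eventually_mem_closure_sup ((eventually_gt_atTop 0).mono hcl) ?_
    (fun ε hε => Lp.eventually_norm_inner_le g hε) fun ε hε => ?_
  · filter_upwards [eventually_ge_atTop 4] with Λ hΛ u hu v hv
    obtain ⟨w, hw, rfl⟩ := hv
    refine (norm_inner_gOp_le hFp hIop (by linarith) hu hw).trans ?_
    have : Λ⁻¹ ≤ 4⁻¹ := inv_anti₀ (by norm_num) hΛ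
    change _ ≤ ‖u‖ * ‖gOp Fp Iop w‖ / 2
    rw [LinearIsometryEquiv.norm_map]
    nlinarith [mul_nonneg (norm_nonneg u) (norm_nonneg w)]
  · filter_upwards [Lp.eventually_norm_inner_le (𝕜 := ℂ) (gOp Fp Iop g) hε] with Λ hΛ v hv
    obtain ⟨w, hw, rfl⟩ := hv
    change ‖inner ℂ g (gOp Fp Iop w)‖ ≤ ε * ‖gOp Fp Iop w‖
    rw [← (gOp Fp Iop).inner_map_left_of_involutive (gOp_gOp hFp hIop),
      LinearIsometryEquiv.norm_map]
    exact hΛ w hw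

end Kspace

/-- `⋂_{Λ>0} H_Λ = {0}` and `⋃_{Λ>0} H_Λ` is dense in `K`. -/
theorem statement14
    (Fp : Kspace ≃ₗᵢ[ℂ] Kspace) (hFp : IsCosineTransform Fp)
    (Iop : Kspace ≃ₗᵢ[ℂ] Kspace) (hIop : IsIOperator Iop) :
    (∀ f : Kspace, (∀ Λ : ℝ, 0 < Λ → MemH Fp Iop Λ f) → f = 0) ∧
    Dense {f : Kspace | ∃ Λ : ℝ, 0 < Λ ∧ MemH Fp Iop Λ f} := by
  refine ⟨fun f hf => eq_zero_of_forall_ae_eq_zero_Ioi fun Λ hΛ => (hf Λ hΛ).1,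
    (dense_iSup_hSpace hFp hIop).mono fun f hf => ?_⟩
  have hdir : Directed (· ≤ ·) fun Λ : Ioi (0 : ℝ) => hSpace Fp Iop Λ :=
    (hSpace_mono.comp (Subtype.mono_coe _)).directed_le
  obtain ⟨⟨Λ, hΛ⟩, hfΛ⟩ := (Submodule.mem_iSup_of_directed _ hdir).1 hf
  exact ⟨Λ, hΛ, memH_of_mem_hSpace hFp hIop hfΛ⟩
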